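/- arXiv:1510.02295 — 2 statements merged into one kernel-verified Lean document; each statement's English description precedes it below -/
import Mathlib

section
/- Let L be a Lie algebra over ℂ and f_1, …, f_N ∈ L satisfying the right bracket condition: for all 1 ≤ i < j ≤ N, either ⁅f_i, f_j⁆ = 0 or there exist k < j and a nonzero a ∈ ℂ with ⁅f_i, f_j⁆ = a • f_k. Let Ψ: ℤ^N → ℤ be an integral weight function such that Ψ(e_i) + Ψ(e_j) = Ψ(e_k) whenever i < j, k < j and ⁅f_i, f_j⁆ = a • f_k with a ≠ 0 (in particular Ψ = 0, giving the plain right lexicographic order, is allowed). Let > be the Ψ-weighted right lexicographic order on ℕ^N. Then (f_1, …, f_N) together with > is quasi-commutative: every product ι(f_{i_1}) ⋯ ι(f_{i_t}) in U(L) lies in f^{exp(i_1,…,i_t)} + span_ℂ{f^n : n ∈ ℕ^N, n < exp(i_1,…,i_t)}. -/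
/-!
Sort a word by adjacent transpositions. At a descent `f_b f_a` with `a < b`, the relation
`ι(f_b) ι(f_a) = ι(f_a) ι(f_b) + ι⁅f_b, f_a⁆` yields a word with one inversion fewer and the
same exponent, plus, by the right bracket condition, a multiple of the shorter word in which
`f_b f_a` is replaced by `f_k` with `k < b`. That shorter word has the same `Ψ`-weight (by the
hypothesis on `Ψ`), a smaller `b`-th exponent and the same later exponents, so its exponent is
strictly smaller. Induction on (length, inversions), together with transitivity of the order,
leaves only sorted words, whose products are exactly the ordered monomials.
-/

open Finset

noncomputable section

/-- Embedding of `ℕ^N` into `ℤ^N`. -/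
def natToInt {N : ℕ} (m : Fin N → ℕ) : Fin N → ℤ := fun i => (m i : ℤ)

/-- `m >_rlex m'` : there is an index `i` with `m i > m' i` and `m j = m' j` for all
`j > i`. -/
def rlexGT {N : ℕ} (m m' : Fin N → ℕ) : Prop :=
  ∃ i : Fin N, m' i < m i ∧ ∀ j : Fin N, i < j → m j = m' j

/-- The `Ψ`-weighted right lexicographic order: `m > m'` iff `Ψ m > Ψ m'`, or
`Ψ m = Ψ m'` and `m >_rlex m'`. -/
def wrlexGT {N : ℕ} (Ψ : (Fin N → ℤ) →ₗ[ℤ] ℤ) (m m' : Fin N → ℕ) : Prop :=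
  Ψ (natToInt m') < Ψ (natToInt m) ∨
    (Ψ (natToInt m) = Ψ (natToInt m') ∧ rlexGT m m')

variable {L : Type*} [LieRing L] [LieAlgebra ℂ L]

/-- The ordered monomial `f^m = ι(f₁)^{m₁} ⋯ ι(f_N)^{m_N}` in `U(L)`. -/
def ordMon {N : ℕ} (f : Fin N → L) (m : Fin N → ℕ) : UniversalEnvelopingAlgebra ℂ L :=
  (List.ofFn fun i => (UniversalEnvelopingAlgebra.ι ℂ (f i)) ^ (m i)).prod

/-- The product `ι(f_{i₁}) ⋯ ι(f_{i_t})` in `U(L)` associated to a word `w`. -/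
def wordProd {N : ℕ} (f : Fin N → L) {t : ℕ} (w : Fin t → Fin N) :
    UniversalEnvelopingAlgebra ℂ L :=
  (List.ofFn fun l => UniversalEnvelopingAlgebra.ι ℂ (f (w l))).prod

/-- The exponent of a word: its `k`-th coordinate is the number of occurrences of the
letter `k` in the word. -/
def expOf {N t : ℕ} (w : Fin t → Fin N) : Fin N → ℕ :=
  fun k => (Finset.univ.filter fun l => w l = k).card

/-- `(f₁, …, f_N)` together with the order `r` (where `r m n` means `m > n`) is
quasi-commutative: every product `ι(f_{i₁}) ⋯ ι(f_{i_t})` lies in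
`f^{exp(i₁,…,i_t)} + span ℂ {f^n : n < exp(i₁,…,i_t)}`. -/
def QuasiCommutative {N : ℕ} (f : Fin N → L)
    (r : (Fin N → ℕ) → (Fin N → ℕ) → Prop) : Prop :=
  ∀ (t : ℕ) (w : Fin t → Fin N),
    wordProd f w - ordMon f (expOf w) ∈
      Submodule.span ℂ {x : UniversalEnvelopingAlgebra ℂ L |
        ∃ n : Fin N → ℕ, r (expOf w) n ∧ x = ordMon f n}

namespace List

variable {α : Type*} [LinearOrder α]

def inversionCount : List α → ℕ
  | [] => 0
  | x :: xs => xs.countP (· < x) + inversionCount xs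

theorem inversionCount_append_add_inversionCount {s s' : List α} (h : s.Perm s')
    (u : List α) :
    inversionCount (u ++ s) + inversionCount s' = inversionCount (u ++ s') + inversionCount s := by
  induction u with
  | nil => simp [Nat.add_comm]
  | cons x u ih =>
    have hc := (h.append_left u).countP_eq (· < x)
    simp only [cons_append, inversionCount]
    omega

theorem inversionCount_append_cons_cons {a b : α} (hab : a < b) (u v : List α) :
    inversionCount (u ++ a :: b :: v) + 1 = inversionCount (u ++ b :: a :: v) := by
  have hswap : inversionCount (b :: a :: v) = inversionCount (a :: b :: v) + 1 := by
    simp [inversionCount, hab, not_lt.2 hab.le]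
    omega
  have := inversionCount_append_add_inversionCount (Perm.swap b a v) u
  omega

theorem exists_eq_append_cons_cons_of_not_pairwise {w : List α}
    (hw : ¬ w.Pairwise (· ≤ ·)) : ∃ u a b v, a < b ∧ w = u ++ b :: a :: v := by
  contrapose! hw
  refine isChain_iff_pairwise.1 (isChain_iff_forall_rel_of_append_cons_cons.2 ?_)
  intro b a u v hw'
  exact not_lt.1 fun hab => hw u a b v hab hw'

end List

section Exponents

variable {N : ℕ}

def listExp (w : List (Fin N)) : Fin N → ℕ := fun k => w.count k

@[simp]
theorem listExp_cons (a : Fin N) (w : List (Fin N)) :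
    listExp (a :: w) = Pi.single a 1 + listExp w := by
  funext k
  simp only [listExp, List.count_cons, beq_iff_eq, Pi.add_apply, Pi.single_apply]
  split_ifs <;> omega

@[simp]
theorem listExp_append (u v : List (Fin N)) : listExp (u ++ v) = listExp u + listExp v := by
  funext k
  simp [listExp]

theorem listExp_ofFn {t : ℕ} (w : Fin t → Fin N) : listExp (List.ofFn w) = expOf w := by
  funext k
  rw [listExp, expOf, ← Multiset.coe_count, ← Fin.univ_val_map, Multiset.count_map]
  simp_rw [eq_comm (a := k)]
  rfl

@[simp]
theorem natToInt_add (m n : Fin N → ℕ) : natToInt (m + n) = natToInt m + natToInt n := by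
  funext i
  simp [natToInt]

@[simp]
theorem natToInt_single (i : Fin N) : natToInt (Pi.single i 1) = Pi.single i 1 := by
  funext j
  simp [natToInt, Pi.single_apply]

end Exponents

section Orders

variable {N : ℕ}

theorem rlexGT_trans {m n p : Fin N → ℕ} (hmn : rlexGT m n) (hnp : rlexGT n p) :
    rlexGT m p := by
  obtain ⟨i, hi, hmi⟩ := hmn
  obtain ⟨i', hi', hni'⟩ := hnp
  rcases lt_trichotomy i i' with h | rfl | h
  · exact ⟨i', hmi i' h ▸ hi', fun j hj => (hmi j (h.trans hj)).trans (hni' j hj)⟩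
  · exact ⟨i, hi'.trans hi, fun j hj => (hmi j hj).trans (hni' j hj)⟩
  · exact ⟨i, hni' i h ▸ hi, fun j hj => (hmi j hj).trans (hni' j (h.trans hj))⟩

instance (Ψ : (Fin N → ℤ) →ₗ[ℤ] ℤ) : IsTrans (Fin N → ℕ) (wrlexGT Ψ) where
  trans _ _ _ hmn hnp := by
    rcases hmn with hmn | ⟨hmn, hmn'⟩ <;> rcases hnp with hnp | ⟨hnp, hnp'⟩
    · exact Or.inl (hnp.trans hmn)
    · exact Or.inl (hnp ▸ hmn)
    · exact Or.inl (hmn ▸ hnp)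
    · exact Or.inr ⟨hmn.trans hnp, rlexGT_trans hmn' hnp'⟩

theorem wrlexGT_single_add_single_add (Ψ : (Fin N → ℤ) →ₗ[ℤ] ℤ) {a b k : Fin N}
    (hab : a < b) (hkb : k < b)
    (hΨ : Ψ (Pi.single a 1) + Ψ (Pi.single b 1) = Ψ (Pi.single k 1)) (c : Fin N → ℕ) :
    wrlexGT Ψ (Pi.single b 1 + Pi.single a 1 + c) (Pi.single k 1 + c) := by
  refine Or.inr ⟨?_, b, ?_, fun j hj => ?_⟩
  · simp only [natToInt_add, natToInt_single, map_add]
    omega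
  · simp [hab.ne', hkb.ne']
  · simp [hj.ne', (hab.trans hj).ne', (hkb.trans hj).ne']

end Orders

namespace UniversalEnvelopingAlgebra

variable {R : Type*} [CommRing R] {L : Type*} [LieRing L] [LieAlgebra R L]

attribute [local instance 100] LieRing.ofAssociativeRing

theorem ι_mul_ι (x y : L) : ι R x * ι R y = ι R y * ι R x + ι R ⁅x, y⁆ := by
  rw [LieHom.map_lie, Ring.lie_def]
  abel

end UniversalEnvelopingAlgebra

section WordProducts

open UniversalEnvelopingAlgebra

variable {N : ℕ} (f : Fin N → L)

def listWordProd (w : List (Fin N)) : UniversalEnvelopingAlgebra ℂ L :=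
  (w.map fun i => ι ℂ (f i)).prod

@[simp]
theorem listWordProd_cons (a : Fin N) (w : List (Fin N)) :
    listWordProd f (a :: w) = ι ℂ (f a) * listWordProd f w := by
  simp [listWordProd]

@[simp]
theorem listWordProd_append (u v : List (Fin N)) :
    listWordProd f (u ++ v) = listWordProd f u * listWordProd f v := by
  simp [listWordProd]

theorem listWordProd_ofFn {t : ℕ} (w : Fin t → Fin N) :
    listWordProd f (List.ofFn w) = wordProd f w := by
  rw [listWordProd, List.map_ofFn]
  rfl

theorem listWordProd_append_cons_cons (a b : Fin N) (u v : List (Fin N)) :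
    listWordProd f (u ++ b :: a :: v) =
      listWordProd f (u ++ a :: b :: v) +
        listWordProd f u * ι ℂ ⁅f b, f a⁆ * listWordProd f v := by
  simp only [listWordProd_append, listWordProd_cons, ← mul_assoc, ι_mul_ι (f b)]
  noncomm_ring

def sortedWord (m : Fin N → ℕ) : List (Fin N) :=
  (List.ofFn fun i => List.replicate (m i) i).flatten

omit f in
theorem sortedWord_pairwise (m : Fin N → ℕ) : (sortedWord m).Pairwise (· ≤ ·) := by
  refine List.pairwise_flatten.2 ⟨?_, List.pairwise_ofFn.2 fun i j hij x hx y hy => ?_⟩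
  · simp only [List.mem_ofFn, forall_exists_index]
    rintro _ i rfl
    exact List.pairwise_replicate.2 (Or.inr le_rfl)
  · rw [List.eq_of_mem_replicate hx, List.eq_of_mem_replicate hy]
    exact hij.le

omit f in
@[simp]
theorem listExp_sortedWord (m : Fin N → ℕ) : listExp (sortedWord m) = m := by
  funext k
  simp [listExp, sortedWord, List.count_flatten, List.sum_ofFn, List.count_replicate]

theorem listWordProd_sortedWord (m : Fin N → ℕ) :
    listWordProd f (sortedWord m) = ordMon f m := by
  simp [listWordProd, sortedWord, List.map_flatten, List.prod_flatten, ordMon,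
    Function.comp_def, List.prod_replicate]

theorem listWordProd_of_pairwise {w : List (Fin N)} (hw : w.Pairwise (· ≤ ·)) :
    listWordProd f w = ordMon f (listExp w) := by
  have hperm : w.Perm (sortedWord (listExp w)) := by
    rw [List.perm_iff_count]
    intro k
    exact congrFun (listExp_sortedWord (listExp w)).symm k
  rw [hperm.eq_of_pairwise' hw (sortedWord_pairwise _), listWordProd_sortedWord,
    listExp_sortedWord]

end WordProducts

section BelowSpan

variable {N : ℕ} (f : Fin N → L)

def belowSpan (r : (Fin N → ℕ) → (Fin N → ℕ) → Prop) (m : Fin N → ℕ) :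
    Submodule ℂ (UniversalEnvelopingAlgebra ℂ L) :=
  Submodule.span ℂ {x | ∃ n, r m n ∧ x = ordMon f n}

variable {f} {r : (Fin N → ℕ) → (Fin N → ℕ) → Prop}

theorem ordMon_mem_belowSpan {m n : Fin N → ℕ} (h : r m n) : ordMon f n ∈ belowSpan f r m :=
  Submodule.subset_span ⟨n, h, rfl⟩

theorem belowSpan_mono [IsTrans _ r] {m m' : Fin N → ℕ} (h : r m m') :
    belowSpan f r m' ≤ belowSpan f r m :=
  Submodule.span_mono fun _ ⟨n, hn, hx⟩ => ⟨n, _root_.trans h hn, hx⟩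

end BelowSpan

open UniversalEnvelopingAlgebra in
theorem listWordProd_sub_ordMon_mem_belowSpan {N : ℕ} (f : Fin N → L)
    (Ψ : (Fin N → ℤ) →ₗ[ℤ] ℤ)
    (hbr : ∀ i j : Fin N, i < j →
      ⁅f i, f j⁆ = 0 ∨ ∃ k : Fin N, k < j ∧ ∃ a : ℂ, a ≠ 0 ∧ ⁅f i, f j⁆ = a • f k)
    (hΨbr : ∀ i j k : Fin N, ∀ a : ℂ, i < j → k < j → a ≠ 0 → ⁅f i, f j⁆ = a • f k →
      Ψ (Pi.single i 1) + Ψ (Pi.single j 1) = Ψ (Pi.single k 1))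
    (w : List (Fin N)) :
    listWordProd f w - ordMon f (listExp w) ∈ belowSpan f (wrlexGT Ψ) (listExp w) := by
  by_cases hw : w.Pairwise (· ≤ ·)
  · simp [listWordProd_of_pairwise f hw]
  obtain ⟨u, a, b, v, hab, rfl⟩ := List.exists_eq_append_cons_cons_of_not_pairwise hw
  have swapped := listWordProd_sub_ordMon_mem_belowSpan f Ψ hbr hΨbr (u ++ a :: b :: v)
  have hexp : listExp (u ++ a :: b :: v) = listExp (u ++ b :: a :: v) := by
    simp only [listExp_append, listExp_cons]
    abel
  rw [hexp] at swapped
  rw [listWordProd_append_cons_cons, add_sub_right_comm]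
  refine add_mem swapped ?_
  rcases hbr a b hab with hzero | ⟨k, hkb, s, hs0, hs⟩
  · rw [← lie_skew, hzero, neg_zero, map_zero, mul_zero, zero_mul]
    exact zero_mem _
  have shorter := listWordProd_sub_ordMon_mem_belowSpan f Ψ hbr hΨbr (u ++ k :: v)
  have hlt : wrlexGT Ψ (listExp (u ++ b :: a :: v)) (listExp (u ++ k :: v)) := by
    convert wrlexGT_single_add_single_add Ψ hab hkb (hΨbr a b k s hab hkb hs0 hs)
      (listExp (u ++ v)) using 1 <;> simp only [listExp_append, listExp_cons] <;> abel
  have hbracket : listWordProd f u * ι ℂ ⁅f b, f a⁆ * listWordProd f v =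
      (-s) • listWordProd f (u ++ k :: v) := by
    rw [← lie_skew, hs, ← neg_smul, map_smul, listWordProd_append, listWordProd_cons,
      mul_smul_comm, smul_mul_assoc, mul_assoc]
  rw [hbracket, ← sub_add_cancel (listWordProd f (u ++ k :: v))
    (ordMon f (listExp (u ++ k :: v)))]
  exact Submodule.smul_mem _ _ (add_mem (belowSpan_mono hlt shorter) (ordMon_mem_belowSpan hlt))
termination_by (w.length, w.inversionCount)
decreasing_by
  all_goals subst_vars
  · have := List.inversionCount_append_cons_cons hab u v
    exact Prod.Lex.right' _ (by simp) (by omega)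
  · exact Prod.Lex.left _ _ (by simp)

theorem right_bracket_condition_quasiCommutative_general {N : ℕ} (f : Fin N → L)
    (Ψ : (Fin N → ℤ) →ₗ[ℤ] ℤ)
    (hbr : ∀ i j : Fin N, i < j →
      ⁅f i, f j⁆ = 0 ∨ ∃ k : Fin N, k < j ∧ ∃ a : ℂ, a ≠ 0 ∧ ⁅f i, f j⁆ = a • f k)
    (hΨbr : ∀ i j k : Fin N, ∀ a : ℂ, i < j → k < j → a ≠ 0 → ⁅f i, f j⁆ = a • f k →
      Ψ (Pi.single i 1) + Ψ (Pi.single j 1) = Ψ (Pi.single k 1)) :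
    QuasiCommutative f (wrlexGT Ψ) := by
  intro t w
  rw [← listWordProd_ofFn, ← listExp_ofFn]
  exact listWordProd_sub_ordMon_mem_belowSpan f Ψ hbr hΨbr (List.ofFn w)

/-- If `(f₁, …, f_N)` satisfies the right bracket condition (for `i < j`, either
`⁅fᵢ, fⱼ⁆ = 0` or `⁅fᵢ, fⱼ⁆ = a • f_k` with `a ≠ 0` and `k < j`), and the integral weight
function `Ψ` satisfies `Ψ(eᵢ) + Ψ(eⱼ) = Ψ(e_k)` for every such bracket relation, then
`(f₁, …, f_N)` is quasi-commutative with respect to the `Ψ`-weighted right lexicographic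
order. -/
theorem right_bracket_condition_quasiCommutative {N : ℕ} (f : Fin N → L)
    (Ψ : (Fin N → ℤ) →ₗ[ℤ] ℤ)
    (hΨnat : ∀ m : Fin N → ℕ, 0 ≤ Ψ (natToInt m))
    (hbr : ∀ i j : Fin N, i < j →
      ⁅f i, f j⁆ = 0 ∨ ∃ k : Fin N, k < j ∧ ∃ a : ℂ, a ≠ 0 ∧ ⁅f i, f j⁆ = a • f k)
    (hΨbr : ∀ i j k : Fin N, ∀ a : ℂ, i < j → k < j → a ≠ 0 → ⁅f i, f j⁆ = a • f k →
      Ψ (Pi.single i 1) + Ψ (Pi.single j 1) = Ψ (Pi.single k 1)) :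
    QuasiCommutative f (wrlexGT Ψ) :=
  right_bracket_condition_quasiCommutative_general f Ψ hbr hΨbr

end
end

section
/- Let L be a Lie algebra over ℂ, let f_1, …, f_N ∈ L, and let Ψ: ℤ^N → ℤ be an integral weight function such that for all 1 ≤ i < j ≤ N the bracket ⁅f_i, f_j⁆ lies in span_ℂ{f_k : Ψ(e_k) < Ψ(e_i) + Ψ(e_j)}. Let > be the Ψ-weighted lexicographic order on ℕ^N. Then (f_1, …, f_N) together with > is quasi-commutative: every product ι(f_{i_1}) ⋯ ι(f_{i_t}) in U(L) lies in f^{exp(i_1,…,i_t)} + span_ℂ{f^n : n ∈ ℕ^N, n < exp(i_1,…,i_t)}. -/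
open Finset

noncomputable section

/-- `m >_lex m'` : there is an index `i` with `m i > m' i` and `m j = m' j` for all `j < i`. -/
def lexGT {N : ℕ} (m m' : Fin N → ℕ) : Prop :=
  ∃ i : Fin N, m' i < m i ∧ ∀ j : Fin N, j < i → m j = m' j

/-- The `Ψ`-weighted lexicographic order: `m > m'` iff `Ψ m > Ψ m'`, or
`Ψ m = Ψ m'` and `m >_lex m'`. -/
def wlexGT {N : ℕ} (Ψ : (Fin N → ℤ) →ₗ[ℤ] ℤ) (m m' : Fin N → ℕ) : Prop :=
  Ψ (natToInt m') < Ψ (natToInt m) ∨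
    (Ψ (natToInt m) = Ψ (natToInt m') ∧ lexGT m m')

variable {L : Type*} [LieRing L] [LieAlgebra ℂ L]

/-!
Bubble sort. If a word has an adjacent descent `i > j`, then
`ι(fᵢ) ι(fⱼ) = ι(fⱼ) ι(fᵢ) - ι⁅fⱼ, fᵢ⁆`, so the word equals the swapped word
(same exponent, one inversion fewer) minus a combination, by the bracket hypothesis, of words
of strictly smaller `Ψ`-weight, whose ordered monomials are all below the exponent of the
original word.
A word without descents is its own ordered monomial. Induction on the pair
(weight, inversions), which is well founded because `Ψ ≥ 0` on `ℕ^N`, concludes.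
-/

namespace List

section Inversions

variable {α : Type*} [LinearOrder α]

def inversions : List α → ℕ
  | [] => 0
  | a :: l => l.countP (· < a) + inversions l

theorem inversions_append_swap_lt (u v : List α) {i j : α} (h : j < i) :
    inversions (u ++ j :: i :: v) < inversions (u ++ i :: j :: v) := by
  induction u with
  | nil => simp [inversions, h, h.not_gt]; omega
  | cons a u ih =>
    simp only [cons_append, inversions]
    rw [((Perm.swap i j v).append_left u).countP_eq]
    omega

theorem pairwise_le_or_exists_descent (w : List α) :
    w.Pairwise (· ≤ ·) ∨ ∃ u i j v, j < i ∧ w = u ++ i :: j :: v := by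
  rw [← isChain_iff_pairwise, isChain_iff_forall_rel_of_append_cons_cons]
  by_contra! h
  obtain ⟨⟨i, j, u, v, hw, hji⟩, hno⟩ := h
  exact hno u i j v hji hw

end Inversions

theorem prod_map_eq_prod_ofFn_pow_count {M : Type*} [Monoid M] {N : ℕ} (g : Fin N → M)
    {w : List (Fin N)} (hw : w.Pairwise (· ≤ ·)) :
    (w.map g).prod = (ofFn fun i => g i ^ w.count i).prod := by
  set c := (finRange N).flatMap fun i => replicate (w.count i) i
  have hc : c.Pairwise (· ≤ ·) := by
    refine pairwise_flatMap.2 ⟨fun i _ => pairwise_replicate.2 (Or.inr le_rfl), ?_⟩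
    refine (pairwise_le_finRange N).imp fun hij x hx y hy => ?_
    rw [eq_of_mem_replicate hx, eq_of_mem_replicate hy]
    exact hij
  have hperm : w.Perm c := by
    refine perm_iff_count.2 fun k => ?_
    simp [c, count_flatMap, count_replicate, ← Fin.sum_univ_def]
  conv_lhs => rw [hperm.eq_of_sortedLE (sortedLE_iff_pairwise.2 hw) (sortedLE_iff_pairwise.2 hc)]
  simp [c, flatMap, map_flatten, prod_flatten, ofFn_eq_map, Function.comp_def]

end List

namespace UniversalEnvelopingAlgebra

attribute [local instance] LieRing.ofAssociativeRing LieAlgebra.ofAssociativeAlgebra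

variable {R L : Type*} [CommRing R] [LieRing L] [LieAlgebra R L]

theorem ι_lie (x y : L) : ι R ⁅x, y⁆ = ι R x * ι R y - ι R y * ι R x := by
  rw [LieHom.map_lie, Ring.lie_def]

theorem mul_ι_mul_mem {s : Set L} {x : L} (hx : x ∈ Submodule.span R s)
    {p : Submodule R (UniversalEnvelopingAlgebra R L)} (a b : UniversalEnvelopingAlgebra R L)
    (h : ∀ y ∈ s, a * ι R y * b ∈ p) : a * ι R x * b ∈ p := by
  let φ := LinearMap.mulLeft R a ∘ₗ LinearMap.mulRight R b ∘ₗ (ι R).toLinearMap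
  have : Submodule.span R s ≤ p.comap φ := Submodule.span_le.2 fun y hy => by
    simpa [φ, mul_assoc] using h y hy
  simpa [φ, mul_assoc] using this hx

end UniversalEnvelopingAlgebra

open UniversalEnvelopingAlgebra

section QuasiCommutativity

variable {N : ℕ} (f : Fin N → L)

def wordProdList (w : List (Fin N)) : UniversalEnvelopingAlgebra ℂ L :=
  (w.map fun i => ι ℂ (f i)).prod

def expOfList (w : List (Fin N)) : Fin N → ℕ := fun k => w.count k

theorem wordProd_eq_wordProdList {t : ℕ} (w : Fin t → Fin N) :
    wordProd f w = wordProdList f (List.ofFn w) := by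
  rw [wordProd, wordProdList, List.map_ofFn]
  rfl

theorem expOf_eq_expOfList {t : ℕ} (w : Fin t → Fin N) : expOf w = expOfList (List.ofFn w) := by
  funext k
  rw [expOf, expOfList, ← Multiset.coe_count, ← Fin.univ_val_map, Multiset.count_map]
  simp_rw [eq_comm (a := k)]
  rfl

theorem wordProdList_eq_ordMon {w : List (Fin N)} (hw : w.Pairwise (· ≤ ·)) :
    wordProdList f w = ordMon f (expOfList w) :=
  List.prod_map_eq_prod_ofFn_pow_count _ hw

theorem wordProdList_append_cons (u v : List (Fin N)) (k : Fin N) :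
    wordProdList f (u ++ k :: v) = wordProdList f u * ι ℂ (f k) * wordProdList f v := by
  simp [wordProdList, mul_assoc]

theorem wordProdList_append_swap (u v : List (Fin N)) (i j : Fin N) :
    wordProdList f (u ++ i :: j :: v) = wordProdList f (u ++ j :: i :: v) -
      wordProdList f u * ι ℂ ⁅f j, f i⁆ * wordProdList f v := by
  simp only [wordProdList, List.map_append, List.map_cons, List.prod_append, List.prod_cons, ι_lie]
  noncomm_ring

theorem expOfList_append_swap (u v : List (Fin N)) (i j : Fin N) :
    expOfList (u ++ j :: i :: v) = expOfList (u ++ i :: j :: v) :=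
  funext fun _ => ((List.Perm.swap i j v).append_left u).count_eq _

theorem natToInt_expOfList (w : List (Fin N)) :
    natToInt (expOfList w) = (w.map fun i => Pi.single i 1).sum := by
  induction w with
  | nil => rfl
  | cons a w ih =>
    rw [List.map_cons, List.sum_cons, ← ih]
    funext k
    rcases eq_or_ne k a with rfl | h
    · simp [natToInt, expOfList, add_comm]
    · simp [natToInt, expOfList, h, h.symm]

variable (Ψ : (Fin N → ℤ) →ₗ[ℤ] ℤ)

def lowerSpan (m : Fin N → ℕ) : Submodule ℂ (UniversalEnvelopingAlgebra ℂ L) :=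
  Submodule.span ℂ {x | ∃ n, wlexGT Ψ m n ∧ x = ordMon f n}

theorem mem_lowerSpan_of_weight_lt {m m' : Fin N → ℕ}
    (hlt : Ψ (natToInt m') < Ψ (natToInt m)) {x : UniversalEnvelopingAlgebra ℂ L}
    (hx : x - ordMon f m' ∈ lowerSpan f Ψ m') :
    x ∈ lowerSpan f Ψ m := by
  have hle : lowerSpan f Ψ m' ≤ lowerSpan f Ψ m := by
    refine Submodule.span_mono ?_
    rintro _ ⟨n, hn | ⟨hn, -⟩, rfl⟩
    · exact ⟨n, Or.inl (hn.trans hlt), rfl⟩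
    · exact ⟨n, Or.inl (hn ▸ hlt), rfl⟩
  have hm' : ordMon f m' ∈ lowerSpan f Ψ m := Submodule.subset_span ⟨m', Or.inl hlt, rfl⟩
  simpa using add_mem (hle hx) hm'

theorem wordProdList_sub_ordMon_mem_lowerSpan
    (hΨnat : ∀ m : Fin N → ℕ, 0 ≤ Ψ (natToInt m))
    (hbr : ∀ i j : Fin N, i < j →
      ⁅f i, f j⁆ ∈ Submodule.span ℂ {x : L | ∃ k : Fin N,
        Ψ (Pi.single k 1) < Ψ (Pi.single i 1) + Ψ (Pi.single j 1) ∧ x = f k})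
    (w : List (Fin N)) :
    wordProdList f w - ordMon f (expOfList w) ∈ lowerSpan f Ψ (expOfList w) := by
  rcases w.pairwise_le_or_exists_descent with hw | ⟨u, i, j, v, hji, rfl⟩
  · rw [wordProdList_eq_ordMon f hw, sub_self]
    exact zero_mem _
  have hswapped := wordProdList_sub_ordMon_mem_lowerSpan hΨnat hbr (u ++ j :: i :: v)
  have hbracket : wordProdList f u * ι ℂ ⁅f j, f i⁆ * wordProdList f v ∈
      lowerSpan f Ψ (expOfList (u ++ i :: j :: v)) := by
    refine mul_ι_mul_mem (hbr j i hji) _ _ ?_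
    rintro _ ⟨k, hk, rfl⟩
    have hlt : Ψ (natToInt (expOfList (u ++ k :: v))) <
        Ψ (natToInt (expOfList (u ++ i :: j :: v))) := by
      simp only [natToInt_expOfList, List.map_append, List.map_cons, List.sum_append,
        List.sum_cons, map_add]
      linarith
    rw [← wordProdList_append_cons]
    exact mem_lowerSpan_of_weight_lt f Ψ hlt
      (wordProdList_sub_ordMon_mem_lowerSpan hΨnat hbr (u ++ k :: v))
  rw [expOfList_append_swap] at hswapped
  rw [wordProdList_append_swap]
  convert sub_mem hswapped hbracket using 1
  abel
termination_by ((Ψ (natToInt (expOfList w))).toNat, w.inversions)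
decreasing_by
  · subst_vars
    rw [expOfList_append_swap]
    exact Prod.Lex.right _ (List.inversions_append_swap_lt u v hji)
  · subst_vars
    have := hΨnat (expOfList (u ++ k :: v))
    exact Prod.Lex.left _ _ (by omega)

end QuasiCommutativity

/-- If for all `i < j` the bracket `⁅fᵢ, fⱼ⁆` lies in the span of those `f_k` with
`Ψ(e_k) < Ψ(eᵢ) + Ψ(eⱼ)`, then `(f₁, …, f_N)` is quasi-commutative with respect to the
`Ψ`-weighted lexicographic order. -/
theorem bracket_lower_weight_quasiCommutative {N : ℕ} (f : Fin N → L)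
    (Ψ : (Fin N → ℤ) →ₗ[ℤ] ℤ)
    (hΨnat : ∀ m : Fin N → ℕ, 0 ≤ Ψ (natToInt m))
    (hbr : ∀ i j : Fin N, i < j →
      ⁅f i, f j⁆ ∈ Submodule.span ℂ {x : L | ∃ k : Fin N,
        Ψ (Pi.single k 1) < Ψ (Pi.single i 1) + Ψ (Pi.single j 1) ∧ x = f k}) :
    QuasiCommutative f (wlexGT Ψ) := by
  intro t w
  rw [wordProd_eq_wordProdList, expOf_eq_expOfList]
  exact wordProdList_sub_ordMon_mem_lowerSpan f Ψ hΨnat hbr (List.ofFn w)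

end
end
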